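/- arXiv:1807.04581 — 2 statements merged into one kernel-verified Lean document; each statement's English description precedes it below -/
import Mathlib

section
/- Let s, p, q be three non-collinear points in the plane and let r be a point lying in the interior of the triangle with vertices s, p, q. Then the three angles subtended at r by the three sides [s,p], [p,q], [q,s] sum to 2π; consequently, at least one of these angles is at least 2π/3, and in particular strictly greater than π/2. -/
/-!
Since `r` lies strictly on the same side of each side line as the opposite vertex, the oriented
angles `∡ s r p`, `∡ p r q`, `∡ q r s` all have the orientation sign of the triangle. Oriented
angles around `r` add up to `0`, so with a common sign the unsigned angles add up to a multiple
of `2π` lying in `(0, 3π]`, that is, to `2π`. The largest of three angles summing to `2π` is at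
least `2π/3 > π/2`.
-/

open EuclideanGeometry Module Real

theorem Matrix.range_cons_cons_cons_empty {α : Type*} (x y z : α) (u : Fin 0 → α) :
    Set.range (vecCons x (vecCons y (vecCons z u))) = {x, y, z} := by
  rw [range_cons, range_cons_cons_empty, Set.singleton_union]

theorem affineIndependent_of_nonempty_interior_convexHull {ι V : Type*} [Fintype ι]
    [NormedAddCommGroup V] [NormedSpace ℝ V] [FiniteDimensional ℝ V] {p : ι → V}
    (hcard : Fintype.card ι = finrank ℝ V + 1)
    (hp : (interior (convexHull ℝ (Set.range p))).Nonempty) : AffineIndependent ℝ p := by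
  rw [affineIndependent_iff_le_finrank_vectorSpan ℝ p hcard, ← direction_affineSpan,
    affineSpan_eq_top_of_nonempty_interior hp, AffineSubspace.direction_top, finrank_top]

theorem sSameSide_affineSpan_pair_add_smul {k V : Type*} [Field k] [LinearOrder k]
    [IsStrictOrderedRing k] [AddCommGroup V] [Module k V] {s p q : V} (hq : q ∉ line[k, s, p])
    {w₀ w₁ w₂ : k} (hw : w₀ + w₁ + w₂ = 1) (hw₂ : 0 < w₂) :
    line[k, s, p].SSameSide (w₀ • s + w₁ • p + w₂ • q) q := by
  have hcomb : w₀ • s + w₁ • p + w₂ • q = w₂ • (q -ᵥ s) +ᵥ AffineMap.lineMap s p w₁ := by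
    rw [AffineMap.lineMap_apply_module, vsub_eq_sub, vadd_eq_add, ← hw]
    module
  rw [hcomb]
  exact AffineSubspace.sSameSide_smul_vsub_vadd_left hq (left_mem_affineSpan_pair k s p)
    (AffineMap.lineMap_mem_affineSpan_pair _ _ _) hw₂

theorem sSameSide_affineSpan_pair_of_mem_interior_convexHull {V : Type*}
    [NormedAddCommGroup V] [NormedSpace ℝ V] {s p q r : V}
    (hind : AffineIndependent ℝ ![s, p, q]) (hr : r ∈ interior (convexHull ℝ {s, p, q})) :
    line[ℝ, s, p].SSameSide r q := by
  have hrange : Set.range ![s, p, q] = {s, p, q} := Matrix.range_cons_cons_cons_empty _ _ _ _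
  let b : AffineBasis (Fin 3) ℝ V :=
    ⟨![s, p, q], hind, hrange ▸ affineSpan_eq_top_of_nonempty_interior ⟨r, hr⟩⟩
  have hpos : ∀ i, 0 < b.coord i r := by
    rw [← Set.mem_ofPred_eq (p := fun x ↦ ∀ i, 0 < b.coord i x), ← b.interior_convexHull]
    exact (show Set.range b = {s, p, q} from hrange) ▸ hr
  have hsum := b.sum_coord_apply_eq_one r
  have hcomb := b.linear_combination_coord_eq_self r
  rw [Fin.sum_univ_three] at hsum hcomb
  have hq : q ∉ line[ℝ, s, p] := fun hq ↦ by
    have hcol := collinear_insert_of_mem_affineSpan_pair hq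
    rw [Set.insert_comm, Set.pair_comm] at hcol
    exact affineIndependent_iff_not_collinear_set.mp hind hcol
  rw [← hcomb]
  exact sSameSide_affineSpan_pair_add_smul hq hsum (hpos 2)

theorem Real.Angle.eq_two_pi_of_coe_eq_zero {x : ℝ} (h0 : 0 < x) (h4 : x < 4 * π)
    (hx : (x : Real.Angle) = 0) : x = 2 * π := by
  obtain ⟨n, rfl⟩ := Real.Angle.coe_eq_zero_iff.mp hx
  rw [zsmul_eq_mul] at h0 h4 ⊢
  have hn : n = 1 := by
    have := Real.two_pi_pos
    have h1 : (0 : ℝ) < n := by nlinarith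
    have h2 : (n : ℝ) < 2 := by nlinarith
    norm_cast at h1 h2
    omega
  simp [hn]

theorem angle_add_angle_add_angle_eq_two_pi_of_oangle_sign_eq {V P : Type*}
    [NormedAddCommGroup V] [InnerProductSpace ℝ V] [MetricSpace P] [NormedAddTorsor V P]
    [Fact (finrank ℝ V = 2)] [Module.Oriented ℝ V (Fin 2)] {s p q r : P}
    (hsp : (∡ s r p).sign = (∡ p r q).sign) (hpq : (∡ p r q).sign = (∡ q r s).sign)
    (h0 : (∡ s r p).sign ≠ 0) : ∠ s r p + ∠ p r q + ∠ q r s = 2 * π := by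
  have hcyc := oangle_add_cyc3 (left_ne_of_oangle_sign_ne_zero h0)
    (right_ne_of_oangle_sign_ne_zero h0) (right_ne_of_oangle_sign_ne_zero (hsp ▸ h0))
  have hcoe : ((∠ s r p + ∠ p r q + ∠ q r s : ℝ) : Real.Angle) = 0 := by
    rcases h : (∡ s r p).sign with _ | _ | _
    · exact absurd h h0
    · rw [h] at hsp
      rw [← hsp] at hpq
      rwa [oangle_eq_neg_angle_of_sign_eq_neg_one h,
        oangle_eq_neg_angle_of_sign_eq_neg_one hsp.symm,
        oangle_eq_neg_angle_of_sign_eq_neg_one hpq.symm, ← neg_add, ← neg_add,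
        neg_eq_zero] at hcyc
    · rw [h] at hsp
      rw [← hsp] at hpq
      rwa [oangle_eq_angle_of_sign_eq_one h, oangle_eq_angle_of_sign_eq_one hsp.symm,
        oangle_eq_angle_of_sign_eq_one hpq.symm] at hcyc
  refine Real.Angle.eq_two_pi_of_coe_eq_zero ?_ ?_ hcoe
  · linarith [angle_pos_of_not_collinear (mt oangle_sign_eq_zero_iff_collinear.mpr h0),
      angle_nonneg p r q, angle_nonneg q r s]
  · linarith [angle_le_pi s r p, angle_le_pi p r q, angle_le_pi q r s, Real.pi_pos]

theorem angle_add_angle_add_angle_eq_two_pi_of_mem_interior_convexHull {V : Type*}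
    [NormedAddCommGroup V] [InnerProductSpace ℝ V] [Fact (finrank ℝ V = 2)] {s p q r : V}
    (hr : r ∈ interior (convexHull ℝ {s, p, q})) : ∠ s r p + ∠ p r q + ∠ q r s = 2 * π := by
  have : FiniteDimensional ℝ V := .of_fact_finrank_eq_succ 1
  let : Module.Oriented ℝ V (Fin 2) := ⟨(finBasisOfFinrankEq ℝ V Fact.out).orientation⟩
  have hind {a b c : V} (h : r ∈ interior (convexHull ℝ {a, b, c})) :
      AffineIndependent ℝ ![a, b, c] := by
    refine affineIndependent_of_nonempty_interior_convexHull (by simp [Fact.out]) ⟨r, ?_⟩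
    rwa [Matrix.range_cons_cons_cons_empty]
  have hr₁ : r ∈ interior (convexHull ℝ {p, q, s}) := by rwa [Set.pair_comm, Set.insert_comm]
  have hr₂ : r ∈ interior (convexHull ℝ {q, s, p}) := by rwa [Set.insert_comm, Set.pair_comm]
  have hσ : (∡ s q p).sign ≠ 0 := by
    rw [Ne, oangle_sign_eq_zero_iff_collinear, Set.pair_comm]
    exact affineIndependent_iff_not_collinear_set.mp (hind hr)
  have hsp := (sSameSide_affineSpan_pair_of_mem_interior_convexHull (hind hr) hr).symm.oangle_sign_eq
    (left_mem_affineSpan_pair ℝ s p) (right_mem_affineSpan_pair ℝ s p)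
  have hpq :=
    (sSameSide_affineSpan_pair_of_mem_interior_convexHull (hind hr₁) hr₁).symm.oangle_sign_eq
      (left_mem_affineSpan_pair ℝ p q) (right_mem_affineSpan_pair ℝ p q)
  have hqs :=
    (sSameSide_affineSpan_pair_of_mem_interior_convexHull (hind hr₂) hr₂).symm.oangle_sign_eq
      (left_mem_affineSpan_pair ℝ q s) (right_mem_affineSpan_pair ℝ q s)
  rw [oangle_rotate_sign q p s, oangle_rotate_sign s q p] at hpq
  rw [oangle_rotate_sign s q p] at hqs
  exact angle_add_angle_add_angle_eq_two_pi_of_oangle_sign_eq (hsp.trans hpq.symm)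
    (hpq.trans hqs.symm) (hsp ▸ hσ)

theorem exists_mem_div_three_le_of_add_add_eq {a b c t : ℝ} (h : a + b + c = t) :
    ∃ x ∈ ({a, b, c} : Set ℝ), t / 3 ≤ x := by
  by_contra! hlt
  simp only [Set.mem_insert_iff, Set.mem_singleton_iff, forall_eq_or_imp, forall_eq] at hlt
  obtain ⟨ha, hb, hc⟩ := hlt
  linarith

theorem stmt_1_general (s p q r : ℂ)
    (hr : r ∈ interior (convexHull ℝ ({s, p, q} : Set ℂ))) :
    EuclideanGeometry.angle s r p + EuclideanGeometry.angle p r q +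
      EuclideanGeometry.angle q r s = 2 * Real.pi ∧
    ∃ a ∈ ({EuclideanGeometry.angle s r p, EuclideanGeometry.angle p r q,
        EuclideanGeometry.angle q r s} : Set ℝ),
      2 * Real.pi / 3 ≤ a ∧ Real.pi / 2 < a := by
  have := Complex.finrank_real_complex_fact
  have hsum := angle_add_angle_add_angle_eq_two_pi_of_mem_interior_convexHull hr
  obtain ⟨a, ha, hge⟩ := exists_mem_div_three_le_of_add_add_eq hsum
  exact ⟨hsum, a, ha, hge, by linarith [Real.pi_pos]⟩

/-- If `r` is interior to the triangle spanned by non-collinear points `s, p, q`,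
then the angles subtended at `r` by the three sides sum to `2π`, and at least one
of them is `≥ 2π/3`, in particular `> π/2`. -/
theorem stmt_1 (s p q r : ℂ) (h : ¬ Collinear ℝ ({s, p, q} : Set ℂ))
    (hr : r ∈ interior (convexHull ℝ ({s, p, q} : Set ℂ))) :
    EuclideanGeometry.angle s r p + EuclideanGeometry.angle p r q +
      EuclideanGeometry.angle q r s = 2 * Real.pi ∧
    ∃ a ∈ ({EuclideanGeometry.angle s r p, EuclideanGeometry.angle p r q,
        EuclideanGeometry.angle q r s} : Set ℝ),
      2 * Real.pi / 3 ≤ a ∧ Real.pi / 2 < a :=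
  stmt_1_general s p q r hr
end

section
/- Let a, b, c, d be four distinct points in the plane such that none of them lies in the convex hull of the other three. Then, after relabeling, the open segments (a,c) and (b,d) connecting alternating pairs of points intersect in exactly one point. -/
private lemma image_eq_aux (f : Fin 4 → ℂ) (I : Set (Fin 4)) :
    f '' I = {x | ((0 : Fin 4) ∈ I ∧ x = f 0) ∨ ((1 : Fin 4) ∈ I ∧ x = f 1) ∨
      ((2 : Fin 4) ∈ I ∧ x = f 2) ∨ ((3 : Fin 4) ∈ I ∧ x = f 3)} := by
  ext z
  simp only [Set.mem_image, Set.mem_setOf_eq]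
  constructor
  · rintro ⟨i, hi, rfl⟩; fin_cases i <;> tauto
  · rintro (⟨h, rfl⟩ | ⟨h, rfl⟩ | ⟨h, rfl⟩ | ⟨h, rfl⟩)
    exacts [⟨0, h, rfl⟩, ⟨1, h, rfl⟩, ⟨2, h, rfl⟩, ⟨3, h, rfl⟩]

private lemma diag_cross (p q r t : ℂ)
    (hp : p ∉ convexHull ℝ ({q, r, t} : Set ℂ))
    (hq : q ∉ convexHull ℝ ({p, r, t} : Set ℂ))
    (hr : r ∉ convexHull ℝ ({p, q, t} : Set ℂ))
    (ht : t ∉ convexHull ℝ ({p, q, r} : Set ℂ))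
    (hne : (convexHull ℝ ({p, r} : Set ℂ) ∩ convexHull ℝ ({q, t} : Set ℂ)).Nonempty) :
    ∃! x : ℂ, x ∈ openSegment ℝ p r ∩ openSegment ℝ q t := by
  rw [convexHull_pair] at hne
  rw [convexHull_pair] at hne
  obtain ⟨x, hx1, hx2⟩ := hne
  have hsubqt1 : segment ℝ q t ⊆ convexHull ℝ ({q, r, t} : Set ℂ) := by
    rw [← convexHull_pair]; exact convexHull_mono (by intro z hz; simp at hz; rcases hz with rfl|rfl <;> simp)
  have hsubqt2 : segment ℝ q t ⊆ convexHull ℝ ({p, q, t} : Set ℂ) := by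
    rw [← convexHull_pair]; exact convexHull_mono (by intro z hz; simp at hz; rcases hz with rfl|rfl <;> simp)
  have hsubpr1 : segment ℝ p r ⊆ convexHull ℝ ({p, r, t} : Set ℂ) := by
    rw [← convexHull_pair]; exact convexHull_mono (by intro z hz; simp at hz; rcases hz with rfl|rfl <;> simp)
  have hsubpr2 : segment ℝ p r ⊆ convexHull ℝ ({p, q, r} : Set ℂ) := by
    rw [← convexHull_pair]; exact convexHull_mono (by intro z hz; simp at hz; rcases hz with rfl|rfl <;> simp)
  have hxp : x ≠ p := fun h => hp (hsubqt1 (h ▸ hx2))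
  have hxr : x ≠ r := fun h => hr (hsubqt2 (h ▸ hx2))
  have hxq : x ≠ q := fun h => hq (hsubpr1 (h ▸ hx1))
  have hxt : x ≠ t := fun h => ht (hsubpr2 (h ▸ hx1))
  have hx1o : x ∈ openSegment ℝ p r :=
    mem_openSegment_of_ne_left_right hxp.symm hxr.symm hx1
  have hx2o : x ∈ openSegment ℝ q t :=
    mem_openSegment_of_ne_left_right hxq.symm hxt.symm hx2
  refine ⟨x, ⟨hx1o, hx2o⟩, ?_⟩
  rintro y ⟨hy1, hy2⟩
  by_contra hyx
  obtain ⟨a, b, ha0, hb0, hab, hxe⟩ := hx1o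
  obtain ⟨a', b', ha0', hb0', hab', hye⟩ := hy1
  obtain ⟨c, d, hc0, hd0, hcd, hxe'⟩ := hx2o
  obtain ⟨c', d', hc0', hd0', hcd', hye'⟩ := hy2
  have hbb' : b ≠ b' := by
    rintro rfl
    have haa' : a = a' := by linarith
    exact hyx (by rw [← hxe, ← hye, haa'])
  have E1 : (a : ℂ) * p + (b : ℂ) * r = x := by
    rw [← hxe]; simp [Complex.real_smul]
  have E2 : (a' : ℂ) * p + (b' : ℂ) * r = y := by
    rw [← hye]; simp [Complex.real_smul]
  have E3 : (c : ℂ) * q + (d : ℂ) * t = x := by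
    rw [← hxe']; simp [Complex.real_smul]
  have E4 : (c' : ℂ) * q + (d' : ℂ) * t = y := by
    rw [← hye']; simp [Complex.real_smul]
  have Ha : (a : ℂ) + (b : ℂ) = 1 := by exact_mod_cast hab
  have Ha' : (a' : ℂ) + (b' : ℂ) = 1 := by exact_mod_cast hab'
  have Hc : (c : ℂ) + (d : ℂ) = 1 := by exact_mod_cast hcd
  have Hc' : (c' : ℂ) + (d' : ℂ) = 1 := by exact_mod_cast hcd'
  have hbb'C : (b : ℂ) - (b' : ℂ) ≠ 0 := by
    rw [sub_ne_zero]
    exact_mod_cast hbb'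
  have S1 : x - y = ((b : ℂ) - b') * (r - p) := by
    linear_combination (-1 : ℂ) * E1 + E2 + p * Ha - p * Ha'
  have S2 : x - y = ((d : ℂ) - d') * (t - q) := by
    linear_combination (-1 : ℂ) * E3 + E4 + q * Hc - q * Hc'
  have S5 : ((b : ℂ) - b') * (r - p) = ((d : ℂ) - d') * (t - q) := by
    linear_combination S2 - S1
  have S3 : x = p + (b : ℂ) * (r - p) := by
    linear_combination (-1 : ℂ) * E1 + p * Ha
  have S4 : x = q + (d : ℂ) * (t - q) := by
    linear_combination (-1 : ℂ) * E3 + q * Hc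
  have key2 : ((b : ℂ) - b') * (p - q) = ((d : ℂ) * (b - b') - b * (d - d')) * (t - q) := by
    linear_combination ((b : ℂ) - b') * (S4 - S3) - (b : ℂ) * S5
  have hcol : Collinear ℝ ({p, q, t} : Set ℂ) := by
    rw [collinear_iff_of_mem (show q ∈ ({p, q, t} : Set ℂ) by simp)]
    refine ⟨t - q, fun z hz => ?_⟩
    simp only [Set.mem_insert_iff, Set.mem_singleton_iff] at hz
    rcases hz with rfl | rfl | rfl
    · refine ⟨d - b * (d - d') / (b - b'), ?_⟩
      have hgoal : z = ((d - b * (d - d') / (b - b') : ℝ) : ℂ) * (t - q) + q := by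
        push_cast
        field_simp
        linear_combination key2
      simpa [Complex.real_smul] using hgoal
    · exact ⟨0, by simp⟩
    · exact ⟨1, by simp⟩
  rcases hcol.wbtw_or_wbtw_or_wbtw with h | h | h
  · refine hq ?_
    have hseg : q ∈ segment ℝ p t := h.mem_segment
    rw [← convexHull_pair] at hseg
    exact convexHull_mono (by intro z hz; simp at hz; rcases hz with rfl|rfl <;> simp) hseg
  · refine ht ?_
    have hseg : t ∈ segment ℝ q p := h.mem_segment
    rw [← convexHull_pair] at hseg
    exact convexHull_mono (by intro z hz; simp at hz; rcases hz with rfl|rfl <;> simp) hseg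
  · refine hp ?_
    have hseg : p ∈ segment ℝ t q := h.mem_segment
    rw [← convexHull_pair] at hseg
    exact convexHull_mono (by intro z hz; simp at hz; rcases hz with rfl|rfl <;> simp) hseg

set_option maxHeartbeats 1600000 in
/-- Four points in convex position (no point in the convex hull of the other three)
can be relabeled so that the open diagonals cross in exactly one point. -/
theorem stmt_14 (a b c d : ℂ)
    (hdist : a ≠ b ∧ a ≠ c ∧ a ≠ d ∧ b ≠ c ∧ b ≠ d ∧ c ≠ d)
    (ha : a ∉ convexHull ℝ ({b, c, d} : Set ℂ))
    (hb : b ∉ convexHull ℝ ({a, c, d} : Set ℂ))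
    (hc : c ∉ convexHull ℝ ({a, b, d} : Set ℂ))
    (hd : d ∉ convexHull ℝ ({a, b, c} : Set ℂ)) :
    ∃ p q r t : ℂ, ({p, q, r, t} : Set ℂ) = {a, b, c, d} ∧
      ∃! x : ℂ, x ∈ openSegment ℝ p r ∩ openSegment ℝ q t := by
  classical
  have hnaf : ¬ AffineIndependent ℝ (![a, b, c, d] : Fin 4 → ℂ) := by
    rw [← finrank_vectorSpan_le_iff_not_affineIndependent ℝ (![a, b, c, d] : Fin 4 → ℂ)
      (show Fintype.card (Fin 4) = 2 + 2 by simp)]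
    calc Module.finrank ℝ (vectorSpan ℝ (Set.range ![a, b, c, d])) ≤ Module.finrank ℝ ℂ :=
          Submodule.finrank_le _
      _ = 2 := Complex.finrank_real_complex
  obtain ⟨I, hI⟩ := Convex.radon_partition hnaf
  rw [image_eq_aux, image_eq_aux] at hI
  by_cases h0 : (0 : Fin 4) ∈ I <;> by_cases h1 : (1 : Fin 4) ∈ I <;>
    by_cases h2 : (2 : Fin 4) ∈ I <;> by_cases h3 : (3 : Fin 4) ∈ I
  -- TTTT : Iᶜ empty
  · have himc : {x : ℂ | ((0 : Fin 4) ∈ Iᶜ ∧ x = ![a,b,c,d] 0) ∨ ((1 : Fin 4) ∈ Iᶜ ∧ x = ![a,b,c,d] 1) ∨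
        ((2 : Fin 4) ∈ Iᶜ ∧ x = ![a,b,c,d] 2) ∨ ((3 : Fin 4) ∈ Iᶜ ∧ x = ![a,b,c,d] 3)} = (∅ : Set ℂ) := by
      ext z; simp [h0, h1, h2, h3]
    rw [himc] at hI
    simp [convexHull_empty] at hI
  -- TTTF : I = {0,1,2}, Iᶜ = {3}
  · have him : {x : ℂ | ((0 : Fin 4) ∈ I ∧ x = ![a,b,c,d] 0) ∨ ((1 : Fin 4) ∈ I ∧ x = ![a,b,c,d] 1) ∨
        ((2 : Fin 4) ∈ I ∧ x = ![a,b,c,d] 2) ∨ ((3 : Fin 4) ∈ I ∧ x = ![a,b,c,d] 3)} = ({a, b, c} : Set ℂ) := by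
      ext z; simp [h0, h1, h2, h3]; try tauto
    have himc : {x : ℂ | ((0 : Fin 4) ∈ Iᶜ ∧ x = ![a,b,c,d] 0) ∨ ((1 : Fin 4) ∈ Iᶜ ∧ x = ![a,b,c,d] 1) ∨
        ((2 : Fin 4) ∈ Iᶜ ∧ x = ![a,b,c,d] 2) ∨ ((3 : Fin 4) ∈ Iᶜ ∧ x = ![a,b,c,d] 3)} = ({d} : Set ℂ) := by
      ext z; simp [h0, h1, h2, h3]
    rw [him, himc, convexHull_singleton] at hI
    obtain ⟨x, hx1, hx2⟩ := hI
    exact absurd (Set.mem_singleton_iff.mp hx2 ▸ hx1) hd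
  -- TTFT : I = {0,1,3}, Iᶜ = {2}
  · have him : {x : ℂ | ((0 : Fin 4) ∈ I ∧ x = ![a,b,c,d] 0) ∨ ((1 : Fin 4) ∈ I ∧ x = ![a,b,c,d] 1) ∨
        ((2 : Fin 4) ∈ I ∧ x = ![a,b,c,d] 2) ∨ ((3 : Fin 4) ∈ I ∧ x = ![a,b,c,d] 3)} = ({a, b, d} : Set ℂ) := by
      ext z; simp [h0, h1, h2, h3]; try tauto
    have himc : {x : ℂ | ((0 : Fin 4) ∈ Iᶜ ∧ x = ![a,b,c,d] 0) ∨ ((1 : Fin 4) ∈ Iᶜ ∧ x = ![a,b,c,d] 1) ∨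
        ((2 : Fin 4) ∈ Iᶜ ∧ x = ![a,b,c,d] 2) ∨ ((3 : Fin 4) ∈ Iᶜ ∧ x = ![a,b,c,d] 3)} = ({c} : Set ℂ) := by
      ext z; simp [h0, h1, h2, h3]
    rw [him, himc, convexHull_singleton] at hI
    obtain ⟨x, hx1, hx2⟩ := hI
    exact absurd (Set.mem_singleton_iff.mp hx2 ▸ hx1) hc
  -- TTFF : I = {0,1}, Iᶜ = {2,3} : diagonals (a,b) and (c,d)
  · have him : {x : ℂ | ((0 : Fin 4) ∈ I ∧ x = ![a,b,c,d] 0) ∨ ((1 : Fin 4) ∈ I ∧ x = ![a,b,c,d] 1) ∨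
        ((2 : Fin 4) ∈ I ∧ x = ![a,b,c,d] 2) ∨ ((3 : Fin 4) ∈ I ∧ x = ![a,b,c,d] 3)} = ({a, b} : Set ℂ) := by
      ext z; simp [h0, h1, h2, h3]
    have himc : {x : ℂ | ((0 : Fin 4) ∈ Iᶜ ∧ x = ![a,b,c,d] 0) ∨ ((1 : Fin 4) ∈ Iᶜ ∧ x = ![a,b,c,d] 1) ∨
        ((2 : Fin 4) ∈ Iᶜ ∧ x = ![a,b,c,d] 2) ∨ ((3 : Fin 4) ∈ Iᶜ ∧ x = ![a,b,c,d] 3)} = ({c, d} : Set ℂ) := by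
      ext z; simp [h0, h1, h2, h3]
    rw [him, himc] at hI
    refine ⟨a, c, b, d, by ext z; simp only [Set.mem_insert_iff, Set.mem_singleton_iff]; tauto, ?_⟩
    exact diag_cross a c b d
      (by rwa [show ({c, b, d} : Set ℂ) = {b, c, d} from by
        ext z; simp only [Set.mem_insert_iff, Set.mem_singleton_iff]; tauto])
      hc hb
      (by rwa [show ({a, c, b} : Set ℂ) = {a, b, c} from by
        ext z; simp only [Set.mem_insert_iff, Set.mem_singleton_iff]; tauto])
      hI
  -- TFTT : I = {0,2,3}, Iᶜ = {1}
  · have him : {x : ℂ | ((0 : Fin 4) ∈ I ∧ x = ![a,b,c,d] 0) ∨ ((1 : Fin 4) ∈ I ∧ x = ![a,b,c,d] 1) ∨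
        ((2 : Fin 4) ∈ I ∧ x = ![a,b,c,d] 2) ∨ ((3 : Fin 4) ∈ I ∧ x = ![a,b,c,d] 3)} = ({a, c, d} : Set ℂ) := by
      ext z; simp [h0, h1, h2, h3]; try tauto
    have himc : {x : ℂ | ((0 : Fin 4) ∈ Iᶜ ∧ x = ![a,b,c,d] 0) ∨ ((1 : Fin 4) ∈ Iᶜ ∧ x = ![a,b,c,d] 1) ∨
        ((2 : Fin 4) ∈ Iᶜ ∧ x = ![a,b,c,d] 2) ∨ ((3 : Fin 4) ∈ Iᶜ ∧ x = ![a,b,c,d] 3)} = ({b} : Set ℂ) := by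
      ext z; simp [h0, h1, h2, h3]
    rw [him, himc, convexHull_singleton] at hI
    obtain ⟨x, hx1, hx2⟩ := hI
    exact absurd (Set.mem_singleton_iff.mp hx2 ▸ hx1) hb
  -- TFTF : I = {0,2}, Iᶜ = {1,3} : diagonals (a,c) and (b,d)
  · have him : {x : ℂ | ((0 : Fin 4) ∈ I ∧ x = ![a,b,c,d] 0) ∨ ((1 : Fin 4) ∈ I ∧ x = ![a,b,c,d] 1) ∨
        ((2 : Fin 4) ∈ I ∧ x = ![a,b,c,d] 2) ∨ ((3 : Fin 4) ∈ I ∧ x = ![a,b,c,d] 3)} = ({a, c} : Set ℂ) := by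
      ext z; simp [h0, h1, h2, h3]
    have himc : {x : ℂ | ((0 : Fin 4) ∈ Iᶜ ∧ x = ![a,b,c,d] 0) ∨ ((1 : Fin 4) ∈ Iᶜ ∧ x = ![a,b,c,d] 1) ∨
        ((2 : Fin 4) ∈ Iᶜ ∧ x = ![a,b,c,d] 2) ∨ ((3 : Fin 4) ∈ Iᶜ ∧ x = ![a,b,c,d] 3)} = ({b, d} : Set ℂ) := by
      ext z; simp [h0, h1, h2, h3]
    rw [him, himc] at hI
    exact ⟨a, b, c, d, rfl, diag_cross a b c d ha hb hc hd hI⟩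
  -- TFFT : I = {0,3}, Iᶜ = {1,2} : diagonals (a,d) and (b,c)
  · have him : {x : ℂ | ((0 : Fin 4) ∈ I ∧ x = ![a,b,c,d] 0) ∨ ((1 : Fin 4) ∈ I ∧ x = ![a,b,c,d] 1) ∨
        ((2 : Fin 4) ∈ I ∧ x = ![a,b,c,d] 2) ∨ ((3 : Fin 4) ∈ I ∧ x = ![a,b,c,d] 3)} = ({a, d} : Set ℂ) := by
      ext z; simp [h0, h1, h2, h3]
    have himc : {x : ℂ | ((0 : Fin 4) ∈ Iᶜ ∧ x = ![a,b,c,d] 0) ∨ ((1 : Fin 4) ∈ Iᶜ ∧ x = ![a,b,c,d] 1) ∨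
        ((2 : Fin 4) ∈ Iᶜ ∧ x = ![a,b,c,d] 2) ∨ ((3 : Fin 4) ∈ Iᶜ ∧ x = ![a,b,c,d] 3)} = ({b, c} : Set ℂ) := by
      ext z; simp [h0, h1, h2, h3]
    rw [him, himc] at hI
    refine ⟨a, b, d, c, by ext z; simp only [Set.mem_insert_iff, Set.mem_singleton_iff]; tauto, ?_⟩
    exact diag_cross a b d c
      (by rwa [show ({b, d, c} : Set ℂ) = {b, c, d} from by
        ext z; simp only [Set.mem_insert_iff, Set.mem_singleton_iff]; tauto])
      (by rwa [show ({a, d, c} : Set ℂ) = {a, c, d} from by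
        ext z; simp only [Set.mem_insert_iff, Set.mem_singleton_iff]; tauto])
      hd hc hI
  -- TFFF : I = {0}, Iᶜ = {1,2,3}
  · have him : {x : ℂ | ((0 : Fin 4) ∈ I ∧ x = ![a,b,c,d] 0) ∨ ((1 : Fin 4) ∈ I ∧ x = ![a,b,c,d] 1) ∨
        ((2 : Fin 4) ∈ I ∧ x = ![a,b,c,d] 2) ∨ ((3 : Fin 4) ∈ I ∧ x = ![a,b,c,d] 3)} = ({a} : Set ℂ) := by
      ext z; simp [h0, h1, h2, h3]
    have himc : {x : ℂ | ((0 : Fin 4) ∈ Iᶜ ∧ x = ![a,b,c,d] 0) ∨ ((1 : Fin 4) ∈ Iᶜ ∧ x = ![a,b,c,d] 1) ∨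
        ((2 : Fin 4) ∈ Iᶜ ∧ x = ![a,b,c,d] 2) ∨ ((3 : Fin 4) ∈ Iᶜ ∧ x = ![a,b,c,d] 3)} = ({b, c, d} : Set ℂ) := by
      ext z; simp [h0, h1, h2, h3]; try tauto
    rw [him, himc, convexHull_singleton] at hI
    obtain ⟨x, hx1, hx2⟩ := hI
    exact absurd (Set.mem_singleton_iff.mp hx1 ▸ hx2) ha
  -- FTTT : I = {1,2,3}, Iᶜ = {0}
  · have him : {x : ℂ | ((0 : Fin 4) ∈ I ∧ x = ![a,b,c,d] 0) ∨ ((1 : Fin 4) ∈ I ∧ x = ![a,b,c,d] 1) ∨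
        ((2 : Fin 4) ∈ I ∧ x = ![a,b,c,d] 2) ∨ ((3 : Fin 4) ∈ I ∧ x = ![a,b,c,d] 3)} = ({b, c, d} : Set ℂ) := by
      ext z; simp [h0, h1, h2, h3]; try tauto
    have himc : {x : ℂ | ((0 : Fin 4) ∈ Iᶜ ∧ x = ![a,b,c,d] 0) ∨ ((1 : Fin 4) ∈ Iᶜ ∧ x = ![a,b,c,d] 1) ∨
        ((2 : Fin 4) ∈ Iᶜ ∧ x = ![a,b,c,d] 2) ∨ ((3 : Fin 4) ∈ Iᶜ ∧ x = ![a,b,c,d] 3)} = ({a} : Set ℂ) := by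
      ext z; simp [h0, h1, h2, h3]
    rw [him, himc, convexHull_singleton] at hI
    obtain ⟨x, hx1, hx2⟩ := hI
    exact absurd (Set.mem_singleton_iff.mp hx2 ▸ hx1) ha
  -- FTTF : I = {1,2}, Iᶜ = {0,3} : diagonals (b,c) and (a,d)
  · have him : {x : ℂ | ((0 : Fin 4) ∈ I ∧ x = ![a,b,c,d] 0) ∨ ((1 : Fin 4) ∈ I ∧ x = ![a,b,c,d] 1) ∨
        ((2 : Fin 4) ∈ I ∧ x = ![a,b,c,d] 2) ∨ ((3 : Fin 4) ∈ I ∧ x = ![a,b,c,d] 3)} = ({b, c} : Set ℂ) := by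
      ext z; simp [h0, h1, h2, h3]
    have himc : {x : ℂ | ((0 : Fin 4) ∈ Iᶜ ∧ x = ![a,b,c,d] 0) ∨ ((1 : Fin 4) ∈ Iᶜ ∧ x = ![a,b,c,d] 1) ∨
        ((2 : Fin 4) ∈ Iᶜ ∧ x = ![a,b,c,d] 2) ∨ ((3 : Fin 4) ∈ Iᶜ ∧ x = ![a,b,c,d] 3)} = ({a, d} : Set ℂ) := by
      ext z; simp [h0, h1, h2, h3]
    rw [him, himc] at hI
    refine ⟨b, a, c, d, by ext z; simp only [Set.mem_insert_iff, Set.mem_singleton_iff]; tauto, ?_⟩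
    exact diag_cross b a c d hb ha
      (by rwa [show ({b, a, d} : Set ℂ) = {a, b, d} from by
        ext z; simp only [Set.mem_insert_iff, Set.mem_singleton_iff]; tauto])
      (by rwa [show ({b, a, c} : Set ℂ) = {a, b, c} from by
        ext z; simp only [Set.mem_insert_iff, Set.mem_singleton_iff]; tauto])
      hI
  -- FTFT : I = {1,3}, Iᶜ = {0,2} : diagonals (b,d) and (a,c)
  · have him : {x : ℂ | ((0 : Fin 4) ∈ I ∧ x = ![a,b,c,d] 0) ∨ ((1 : Fin 4) ∈ I ∧ x = ![a,b,c,d] 1) ∨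
        ((2 : Fin 4) ∈ I ∧ x = ![a,b,c,d] 2) ∨ ((3 : Fin 4) ∈ I ∧ x = ![a,b,c,d] 3)} = ({b, d} : Set ℂ) := by
      ext z; simp [h0, h1, h2, h3]
    have himc : {x : ℂ | ((0 : Fin 4) ∈ Iᶜ ∧ x = ![a,b,c,d] 0) ∨ ((1 : Fin 4) ∈ Iᶜ ∧ x = ![a,b,c,d] 1) ∨
        ((2 : Fin 4) ∈ Iᶜ ∧ x = ![a,b,c,d] 2) ∨ ((3 : Fin 4) ∈ Iᶜ ∧ x = ![a,b,c,d] 3)} = ({a, c} : Set ℂ) := by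
      ext z; simp [h0, h1, h2, h3]
    rw [him, himc] at hI
    refine ⟨b, a, d, c, by ext z; simp only [Set.mem_insert_iff, Set.mem_singleton_iff]; tauto, ?_⟩
    exact diag_cross b a d c
      (by rwa [show ({a, d, c} : Set ℂ) = {a, c, d} from by
        ext z; simp only [Set.mem_insert_iff, Set.mem_singleton_iff]; tauto])
      (by rwa [show ({b, d, c} : Set ℂ) = {b, c, d} from by
        ext z; simp only [Set.mem_insert_iff, Set.mem_singleton_iff]; tauto])
      (by rwa [show ({b, a, c} : Set ℂ) = {a, b, c} from by
        ext z; simp only [Set.mem_insert_iff, Set.mem_singleton_iff]; tauto])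
      (by rwa [show ({b, a, d} : Set ℂ) = {a, b, d} from by
        ext z; simp only [Set.mem_insert_iff, Set.mem_singleton_iff]; tauto])
      hI
  -- FTFF : I = {1}, Iᶜ = {0,2,3}
  · have him : {x : ℂ | ((0 : Fin 4) ∈ I ∧ x = ![a,b,c,d] 0) ∨ ((1 : Fin 4) ∈ I ∧ x = ![a,b,c,d] 1) ∨
        ((2 : Fin 4) ∈ I ∧ x = ![a,b,c,d] 2) ∨ ((3 : Fin 4) ∈ I ∧ x = ![a,b,c,d] 3)} = ({b} : Set ℂ) := by
      ext z; simp [h0, h1, h2, h3]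
    have himc : {x : ℂ | ((0 : Fin 4) ∈ Iᶜ ∧ x = ![a,b,c,d] 0) ∨ ((1 : Fin 4) ∈ Iᶜ ∧ x = ![a,b,c,d] 1) ∨
        ((2 : Fin 4) ∈ Iᶜ ∧ x = ![a,b,c,d] 2) ∨ ((3 : Fin 4) ∈ Iᶜ ∧ x = ![a,b,c,d] 3)} = ({a, c, d} : Set ℂ) := by
      ext z; simp [h0, h1, h2, h3]; try tauto
    rw [him, himc, convexHull_singleton] at hI
    obtain ⟨x, hx1, hx2⟩ := hI
    exact absurd (Set.mem_singleton_iff.mp hx1 ▸ hx2) hb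
  -- FFTT : I = {2,3}, Iᶜ = {0,1} : diagonals (c,d) and (a,b)
  · have him : {x : ℂ | ((0 : Fin 4) ∈ I ∧ x = ![a,b,c,d] 0) ∨ ((1 : Fin 4) ∈ I ∧ x = ![a,b,c,d] 1) ∨
        ((2 : Fin 4) ∈ I ∧ x = ![a,b,c,d] 2) ∨ ((3 : Fin 4) ∈ I ∧ x = ![a,b,c,d] 3)} = ({c, d} : Set ℂ) := by
      ext z; simp [h0, h1, h2, h3]
    have himc : {x : ℂ | ((0 : Fin 4) ∈ Iᶜ ∧ x = ![a,b,c,d] 0) ∨ ((1 : Fin 4) ∈ Iᶜ ∧ x = ![a,b,c,d] 1) ∨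
        ((2 : Fin 4) ∈ Iᶜ ∧ x = ![a,b,c,d] 2) ∨ ((3 : Fin 4) ∈ Iᶜ ∧ x = ![a,b,c,d] 3)} = ({a, b} : Set ℂ) := by
      ext z; simp [h0, h1, h2, h3]
    rw [him, himc] at hI
    refine ⟨c, a, d, b, by ext z; simp only [Set.mem_insert_iff, Set.mem_singleton_iff]; tauto, ?_⟩
    exact diag_cross c a d b
      (by rwa [show ({a, d, b} : Set ℂ) = {a, b, d} from by
        ext z; simp only [Set.mem_insert_iff, Set.mem_singleton_iff]; tauto])
      (by rwa [show ({c, d, b} : Set ℂ) = {b, c, d} from by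
        ext z; simp only [Set.mem_insert_iff, Set.mem_singleton_iff]; tauto])
      (by rwa [show ({c, a, b} : Set ℂ) = {a, b, c} from by
        ext z; simp only [Set.mem_insert_iff, Set.mem_singleton_iff]; tauto])
      (by rwa [show ({c, a, d} : Set ℂ) = {a, c, d} from by
        ext z; simp only [Set.mem_insert_iff, Set.mem_singleton_iff]; tauto])
      hI
  -- FFTF : I = {2}, Iᶜ = {0,1,3}
  · have him : {x : ℂ | ((0 : Fin 4) ∈ I ∧ x = ![a,b,c,d] 0) ∨ ((1 : Fin 4) ∈ I ∧ x = ![a,b,c,d] 1) ∨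
        ((2 : Fin 4) ∈ I ∧ x = ![a,b,c,d] 2) ∨ ((3 : Fin 4) ∈ I ∧ x = ![a,b,c,d] 3)} = ({c} : Set ℂ) := by
      ext z; simp [h0, h1, h2, h3]
    have himc : {x : ℂ | ((0 : Fin 4) ∈ Iᶜ ∧ x = ![a,b,c,d] 0) ∨ ((1 : Fin 4) ∈ Iᶜ ∧ x = ![a,b,c,d] 1) ∨
        ((2 : Fin 4) ∈ Iᶜ ∧ x = ![a,b,c,d] 2) ∨ ((3 : Fin 4) ∈ Iᶜ ∧ x = ![a,b,c,d] 3)} = ({a, b, d} : Set ℂ) := by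
      ext z; simp [h0, h1, h2, h3]; try tauto
    rw [him, himc, convexHull_singleton] at hI
    obtain ⟨x, hx1, hx2⟩ := hI
    exact absurd (Set.mem_singleton_iff.mp hx1 ▸ hx2) hc
  -- FFFT : I = {3}, Iᶜ = {0,1,2}
  · have him : {x : ℂ | ((0 : Fin 4) ∈ I ∧ x = ![a,b,c,d] 0) ∨ ((1 : Fin 4) ∈ I ∧ x = ![a,b,c,d] 1) ∨
        ((2 : Fin 4) ∈ I ∧ x = ![a,b,c,d] 2) ∨ ((3 : Fin 4) ∈ I ∧ x = ![a,b,c,d] 3)} = ({d} : Set ℂ) := by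
      ext z; simp [h0, h1, h2, h3]
    have himc : {x : ℂ | ((0 : Fin 4) ∈ Iᶜ ∧ x = ![a,b,c,d] 0) ∨ ((1 : Fin 4) ∈ Iᶜ ∧ x = ![a,b,c,d] 1) ∨
        ((2 : Fin 4) ∈ Iᶜ ∧ x = ![a,b,c,d] 2) ∨ ((3 : Fin 4) ∈ Iᶜ ∧ x = ![a,b,c,d] 3)} = ({a, b, c} : Set ℂ) := by
      ext z; simp [h0, h1, h2, h3]; try tauto
    rw [him, himc, convexHull_singleton] at hI
    obtain ⟨x, hx1, hx2⟩ := hI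
    exact absurd (Set.mem_singleton_iff.mp hx1 ▸ hx2) hd
  -- FFFF : I empty
  · have him : {x : ℂ | ((0 : Fin 4) ∈ I ∧ x = ![a,b,c,d] 0) ∨ ((1 : Fin 4) ∈ I ∧ x = ![a,b,c,d] 1) ∨
        ((2 : Fin 4) ∈ I ∧ x = ![a,b,c,d] 2) ∨ ((3 : Fin 4) ∈ I ∧ x = ![a,b,c,d] 3)} = (∅ : Set ℂ) := by
      ext z; simp [h0, h1, h2, h3]
    rw [him] at hI
    simp [convexHull_empty] at hI
end
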